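/- arXiv:2404.01538 — 3 statements merged into one kernel-verified Lean document; each statement's English description precedes it below -/
import Mathlib

section
/- Let d be a positive square-free integer with d ≡ 2 or 3 (mod 4), d = n² + r with integers n > 0 and −(n−1) < r < n, r ≠ ±1, and let a₁ = 1/2 + ((2n²+r−1)/(4n(n²+r)))√d and a₂ = 1/2 − ((2n²+r−1)/(4n(n²+r)))√d in K = ℚ(√d). Then M(a₁) = {±1, ±(n − √d)} and M(a₂) = {±1, ±(n + √d)} exactly. -/
/-!
We model the real quadratic field `K = ℚ(√d)` concretely: an element
`a.1 + a.2·√d` is represented by its pair of rational coordinates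
`a : ℚ × ℚ`, and the ring of integers `O_K = ℤ[√d]` (for `d ≡ 2, 3 mod 4`)
by pairs of integers `x : ℤ × ℤ` representing `x.1 + x.2·√d`.
-/

noncomputable section

/-- An element `a.1 + a.2·√d` of `ℚ(√d)`, given by its rational coordinates. -/
abbrev QF := ℚ × ℚ

/-- The real embedding of `ℚ(√d)` sending `√d` to the positive square root. -/
def emb (d : ℤ) (a : QF) : ℝ := (a.1 : ℝ) + (a.2 : ℝ) * Real.sqrt (d : ℝ)

/-- Galois conjugation on `ℚ(√d)`. -/
def conj (a : QF) : QF := (a.1, -a.2)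

/-- `a ∈ ℚ(√d)` is totally positive: both real embeddings are positive. -/
def TotPos (d : ℤ) (a : QF) : Prop := 0 < emb d a ∧ 0 < emb d (conj a)

/-- Multiplication in `ℚ(√d)`, in coordinates. -/
def qmul (d : ℤ) (a b : QF) : QF :=
  (a.1 * b.1 + (d : ℚ) * a.2 * b.2, a.1 * b.2 + a.2 * b.1)

/-- The element of `ℚ(√d)` represented by `x = x.1 + x.2·√d ∈ ℤ[√d]`. -/
def ofInt (x : ℤ × ℤ) : QF := ((x.1 : ℚ), (x.2 : ℚ))

/-- `Tr_{K/ℚ}(a·x²)` for `a ∈ K = ℚ(√d)` and `x = x.1 + x.2·√d ∈ O_K = ℤ[√d]`. -/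
def trForm (d : ℤ) (a : QF) (x : ℤ × ℤ) : ℚ :=
  2 * (a.1 * ((x.1 : ℚ) ^ 2 + (d : ℚ) * (x.2 : ℚ) ^ 2)
    + 2 * (d : ℚ) * a.2 * (x.1 : ℚ) * (x.2 : ℚ))

/-- `μ` is the minimum `μ(a) = min_{x ∈ O_K, x ≠ 0} Tr(a x²)` of the unary form `a x²`. -/
def IsMinOf (d : ℤ) (a : QF) (μ : ℚ) : Prop :=
  (∃ x : ℤ × ℤ, x ≠ 0 ∧ trForm d a x = μ) ∧ ∀ x : ℤ × ℤ, x ≠ 0 → μ ≤ trForm d a x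

/-- The set `M(a) = {x ∈ O_K : Tr(a x²) = μ}` of minimal vectors of `a x²`,
given its minimum `μ = μ(a)`. -/
def MinVecs (d : ℤ) (a : QF) (μ : ℚ) : Set (ℤ × ℤ) :=
  {x : ℤ × ℤ | trForm d a x = μ}

/-- The unary form `a x²` is perfect: `a` is totally positive and is the unique
totally positive element whose minimum equals `μ(a)` and whose set of minimal
vectors contains `M(a)`. -/
def IsPerfect (d : ℤ) (a : QF) : Prop :=
  TotPos d a ∧ ∃ μ : ℚ, IsMinOf d a μ ∧
    ∀ b : QF, TotPos d b → IsMinOf d b μ → MinVecs d a μ ⊆ MinVecs d b μ → b = a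

/-- `u = u.1 + u.2·√d` is a unit of `ℤ[√d]` (norm `±1`). -/
def IsUnitPair (d : ℤ) (u : ℤ × ℤ) : Prop :=
  u.1 ^ 2 - d * u.2 ^ 2 = 1 ∨ u.1 ^ 2 - d * u.2 ^ 2 = -1

/-- `α + β·√d` (with `α, β > 0`) is the fundamental unit of `ℚ(√d)`:
it is a unit, and it is the smallest unit greater than `1`. -/
def IsFundUnit (d α β : ℤ) : Prop :=
  0 < α ∧ 0 < β ∧ IsUnitPair d (α, β) ∧
    ∀ u : ℤ × ℤ, IsUnitPair d u →
      1 < (u.1 : ℝ) + (u.2 : ℝ) * Real.sqrt (d : ℝ) →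
      (α : ℝ) + (β : ℝ) * Real.sqrt (d : ℝ) ≤ (u.1 : ℝ) + (u.2 : ℝ) * Real.sqrt (d : ℝ)

/-- The unary forms `a x²` and `b x²` lie in the same class up to homothety and
`GL₁(O_K)`-equivalence: `a = λ · b · u²` for some positive rational `λ` and unit `u`. -/
def SameClass (d : ℤ) (a b : QF) : Prop :=
  ∃ lam : ℚ, 0 < lam ∧ ∃ u : ℤ × ℤ, IsUnitPair d u ∧
    a = lam • qmul d b (qmul d (ofInt u) (ofInt u))

/-!
For `a = a₁` one computes `n · Tr(a x²) = Q(x, y)` with the integral binary form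
`Q(x, y) = n x² + (2n² + r − 1) x y + n (n² + r) y²` of discriminant `(r − 1)² − 4n² < 0`.
Off the line `y = 0`, completing the square gives `4n Q ≥ (4n² − (r − 1)²) y²`, which exceeds `4n²`
as soon as `|y| ≥ 2` because `|r − 1| < n`; on `y = ±1` one has the factorisation
`Q(x, 1) − n = (x + n)(n (x + n) + r − 1)`, positive unless `x = −n`. Hence `Q ≥ n` on nonzero
vectors with equality exactly at `±(1, 0)` and `±(n, −1)`, so `μ(a₁) = 1`. Since `a₂` is the
Galois conjugate of `a₁`, its minimal vectors are obtained by `y ↦ −y`.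
-/

section Conj

variable {d : ℤ} {a : QF} {μ ν : ℚ}

theorem IsMinOf.unique (hμ : IsMinOf d a μ) (hν : IsMinOf d a ν) : μ = ν := by
  obtain ⟨⟨x, hx, rfl⟩, hμle⟩ := hμ
  obtain ⟨⟨y, hy, rfl⟩, hνle⟩ := hν
  exact le_antisymm (hμle y hy) (hνle x hx)

def conjInt (x : ℤ × ℤ) : ℤ × ℤ := (x.1, -x.2)

theorem conjInt_ne_zero {x : ℤ × ℤ} (hx : x ≠ 0) : conjInt x ≠ 0 := by
  obtain ⟨x₁, x₂⟩ := x
  simp_all [conjInt]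

theorem trForm_conj (x : ℤ × ℤ) : trForm d (conj a) x = trForm d a (conjInt x) := by
  simp only [trForm, conj, conjInt]
  push_cast
  ring

theorem IsMinOf.conj (h : IsMinOf d a μ) : IsMinOf d (conj a) μ := by
  obtain ⟨⟨x, hx, hxμ⟩, hle⟩ := h
  refine ⟨⟨conjInt x, conjInt_ne_zero hx, ?_⟩, fun y hy => ?_⟩
  · rw [trForm_conj]
    simpa [conjInt] using hxμ
  · rw [trForm_conj]
    exact hle _ (conjInt_ne_zero hy)

theorem minVecs_conj : MinVecs d (conj a) μ = conjInt ⁻¹' MinVecs d a μ := by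
  ext x
  simp only [MinVecs, Set.mem_ofPred_eq, Set.mem_preimage, trForm_conj]

end Conj

def qform (n r : ℤ) (p : ℤ × ℤ) : ℤ :=
  n * p.1 ^ 2 + (2 * n ^ 2 + r - 1) * p.1 * p.2 + n * (n ^ 2 + r) * p.2 ^ 2

section qform

variable {n r : ℤ}

theorem qform_neg (p : ℤ × ℤ) : qform n r (-p) = qform n r p := by
  simp only [qform, Prod.fst_neg, Prod.snd_neg]
  ring

theorem qform_mk_one_sub (x : ℤ) :
    qform n r (x, 1) - n = (x + n) * (n * (x + n) + r - 1) := by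
  simp only [qform]
  ring

theorem four_mul_qform (p : ℤ × ℤ) :
    4 * n * qform n r p
      = (2 * n * p.1 + (2 * n ^ 2 + r - 1) * p.2) ^ 2 + (4 * n ^ 2 - (r - 1) ^ 2) * p.2 ^ 2 := by
  simp only [qform]
  ring

theorem qform_of_mem {p : ℤ × ℤ}
    (hp : p ∈ ({(1, 0), (-1, 0), (n, -1), (-n, 1)} : Set (ℤ × ℤ))) : qform n r p = n := by
  simp only [Set.mem_insert_iff, Set.mem_singleton_iff] at hp
  rcases hp with rfl | rfl | rfl | rfl <;> simp only [qform] <;> ring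

variable (hn : 0 < n) (hr₁ : -(n - 1) < r) (hr₂ : r < n)
include hn hr₁ hr₂

theorem lt_qform_mk_one {x : ℤ} (hx : x ≠ -n) : n < qform n r (x, 1) := by
  have key : 0 < (x + n) * (n * (x + n) + r - 1) := by
    rcases (by omega : x + n ≤ -1 ∨ 1 ≤ x + n) with h | h
    · exact mul_pos_of_neg_of_neg (by omega) (by nlinarith)
    · exact mul_pos (by omega) (by nlinarith)
  linarith [qform_mk_one_sub (n := n) (r := r) x]

theorem lt_qform_of_four_le_sq {p : ℤ × ℤ} (hy : 4 ≤ p.2 ^ 2) : n < qform n r p := by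
  have hdisc : 3 * n ^ 2 < 4 * n ^ 2 - (r - 1) ^ 2 := by nlinarith
  have h4 : 4 * n * n < 4 * n * qform n r p := by
    rw [four_mul_qform]
    nlinarith [sq_nonneg (2 * n * p.1 + (2 * n ^ 2 + r - 1) * p.2)]
  exact lt_of_mul_lt_mul_left h4 (by omega)

theorem lt_qform {p : ℤ × ℤ} (h0 : p ≠ 0)
    (hp : p ∉ ({(1, 0), (-1, 0), (n, -1), (-n, 1)} : Set (ℤ × ℤ))) : n < qform n r p := by
  obtain ⟨x, y⟩ := p
  simp only [Set.mem_insert_iff, Set.mem_singleton_iff, Prod.mk.injEq, not_or] at hp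
  rcases (by omega : y = 0 ∨ y = 1 ∨ y = -1 ∨ y ≤ -2 ∨ 2 ≤ y) with rfl | rfl | rfl | hy | hy
  · have hx : 4 ≤ x ^ 2 := by
      have : x ≠ 0 := fun h => h0 (by simp [h])
      rcases (by omega : x ≤ -2 ∨ 2 ≤ x) with h | h <;> nlinarith
    simp only [qform]
    nlinarith
  · exact lt_qform_mk_one hn hr₁ hr₂ (by omega)
  · rw [← qform_neg]
    exact lt_qform_mk_one hn hr₁ hr₂ (x := -x) (by omega)
  all_goals exact lt_qform_of_four_le_sq hn hr₁ hr₂ (by nlinarith)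

theorem le_qform {p : ℤ × ℤ} (h0 : p ≠ 0) : n ≤ qform n r p := by
  by_cases hp : p ∈ ({(1, 0), (-1, 0), (n, -1), (-n, 1)} : Set (ℤ × ℤ))
  · exact (qform_of_mem hp).ge
  · exact (lt_qform hn hr₁ hr₂ h0 hp).le

theorem qform_eq_iff {p : ℤ × ℤ} :
    qform n r p = n ↔ p ∈ ({(1, 0), (-1, 0), (n, -1), (-n, 1)} : Set (ℤ × ℤ)) := by
  refine ⟨fun h => ?_, qform_of_mem⟩
  by_contra hp
  have h0 : p ≠ 0 := by
    rintro rfl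
    simp only [qform, Prod.fst_zero, Prod.snd_zero] at h
    omega
  exact (lt_qform hn hr₁ hr₂ h0 hp).ne' h

end qform

def a₁Of (n r : ℤ) : QF :=
  (1 / 2, (2 * (n : ℚ) ^ 2 + (r : ℚ) - 1) / (4 * (n : ℚ) * ((n : ℚ) ^ 2 + (r : ℚ))))

section a₁Of

variable {n r : ℤ}

theorem trForm_a₁Of (hn : 0 < n) (hr₁ : -(n - 1) < r) (p : ℤ × ℤ) :
    trForm (n ^ 2 + r) (a₁Of n r) p = qform n r p / n := by
  have hnq : (n : ℚ) ≠ 0 := by exact_mod_cast hn.ne'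
  have hdq : (n : ℚ) ^ 2 + r ≠ 0 := by exact_mod_cast (by nlinarith : n ^ 2 + r ≠ 0)
  simp only [trForm, a₁Of, qform]
  push_cast
  field_simp
  ring

variable (hn : 0 < n) (hr₁ : -(n - 1) < r) (hr₂ : r < n)
include hn hr₁ hr₂

theorem isMinOf_a₁Of : IsMinOf (n ^ 2 + r) (a₁Of n r) 1 := by
  have hnq : (0 : ℚ) < n := by exact_mod_cast hn
  refine ⟨⟨(1, 0), by simp, ?_⟩, fun p hp => ?_⟩
  · rw [trForm_a₁Of hn hr₁, qform_of_mem (by simp)]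
    exact div_self hnq.ne'
  · rw [trForm_a₁Of hn hr₁, one_le_div hnq]
    exact_mod_cast le_qform hn hr₁ hr₂ hp

theorem minVecs_a₁Of :
    MinVecs (n ^ 2 + r) (a₁Of n r) 1 = ({(1, 0), (-1, 0), (n, -1), (-n, 1)} : Set (ℤ × ℤ)) := by
  have hnq : (n : ℚ) ≠ 0 := by exact_mod_cast hn.ne'
  ext p
  rw [← qform_eq_iff hn hr₁ hr₂, MinVecs, Set.mem_ofPred_eq, trForm_a₁Of hn hr₁,
    div_eq_one_iff_eq hnq]
  exact_mod_cast Iff.rfl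

end a₁Of

theorem statement12_general (d n r : ℤ) (hd : d = n ^ 2 + r)
    (hn : 0 < n) (hr1 : -(n - 1) < r) (hr2 : r < n) :
    let a₁ : QF := (1 / 2, (2 * (n : ℚ) ^ 2 + (r : ℚ) - 1) / (4 * (n : ℚ) * ((n : ℚ) ^ 2 + (r : ℚ))))
    let a₂ : QF := (1 / 2, -((2 * (n : ℚ) ^ 2 + (r : ℚ) - 1) / (4 * (n : ℚ) * ((n : ℚ) ^ 2 + (r : ℚ)))))
    (∀ μ : ℚ, IsMinOf d a₁ μ →
        MinVecs d a₁ μ = ({(1, 0), (-1, 0), (n, -1), (-n, 1)} : Set (ℤ × ℤ))) ∧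
      (∀ μ : ℚ, IsMinOf d a₂ μ →
        MinVecs d a₂ μ = ({(1, 0), (-1, 0), (n, 1), (-n, -1)} : Set (ℤ × ℤ))) := by
  subst hd
  intro a₁ a₂
  have hmin : IsMinOf (n ^ 2 + r) (a₁Of n r) 1 := isMinOf_a₁Of hn hr1 hr2
  refine ⟨fun μ hμ => ?_, fun μ hμ => ?_⟩
  · rw [hμ.unique hmin]
    exact minVecs_a₁Of hn hr1 hr2
  · rw [hμ.unique hmin.conj, show a₂ = conj (a₁Of n r) from rfl, minVecs_conj,
      minVecs_a₁Of hn hr1 hr2]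
    ext ⟨x, y⟩
    simp only [conjInt, Set.mem_preimage, Set.mem_insert_iff, Set.mem_singleton_iff,
      Prod.mk.injEq]
    omega

/-- for `d = n² + r` with `−(n−1) < r < n`, `r ≠ ±1`, one has
`M(a₁) = {±1, ±(n − √d)}` and `M(a₂) = {±1, ±(n + √d)}` exactly. -/
theorem statement12 (d n r : ℤ) (hd : d = n ^ 2 + r) (hdpos : 0 < d) (hsf : Squarefree d)
    (hmod : d % 4 = 2 ∨ d % 4 = 3) (hn : 0 < n) (hr1 : -(n - 1) < r) (hr2 : r < n)
    (hrne1 : r ≠ 1) (hrnem1 : r ≠ -1) :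
    let a₁ : QF := (1 / 2, (2 * (n : ℚ) ^ 2 + (r : ℚ) - 1) / (4 * (n : ℚ) * ((n : ℚ) ^ 2 + (r : ℚ))))
    let a₂ : QF := (1 / 2, -((2 * (n : ℚ) ^ 2 + (r : ℚ) - 1) / (4 * (n : ℚ) * ((n : ℚ) ^ 2 + (r : ℚ)))))
    (∀ μ : ℚ, IsMinOf d a₁ μ →
        MinVecs d a₁ μ = ({(1, 0), (-1, 0), (n, -1), (-n, 1)} : Set (ℤ × ℤ))) ∧
      (∀ μ : ℚ, IsMinOf d a₂ μ →
        MinVecs d a₂ μ = ({(1, 0), (-1, 0), (n, 1), (-n, -1)} : Set (ℤ × ℤ))) :=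
  statement12_general d n r hd hn hr1 hr2
end
end

section
/- Let d be a positive square-free integer with d ≡ 2 or 3 (mod 4), write d = n² + r with integers n > 0 and −n < r ≠ ±1 ≤ n, and suppose the fundamental unit of K = ℚ(√d) is α + β√d with β = m(m+2) for some odd integer m ≥ 3 and α ≡ ±((m−1)/2·(m+2)² + 1) (mod β²). Then for a₃ = α + β√d one has M(a₃) = {±(n − √d), ±(α − β√d)(n + √d)} exactly. -/
/-!
We model the real quadratic field `K = ℚ(√d)` concretely: an element
`a.1 + a.2·√d` is represented by its pair of rational coordinates
`a : ℚ × ℚ`, and the ring of integers `O_K = ℤ[√d]` (for `d ≡ 2, 3 mod 4`)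
by pairs of integers `x : ℤ × ℤ` representing `x.1 + x.2·√d`.
-/

noncomputable section

/-!
The congruence on `α` gives `α² ≡ 1 (mod β²)`, so `α + β√d` has norm `1`, and `α ≡ c (mod β)`
for `c = ∓(m + 1)`, where `c² - 1 = β`. Writing `α = βN + c`, the norm equation becomes
`β(d - N²) = 2Nc + 1`, which forces `|d - N²| < N`, hence `N = n` and `d - N² = r`.
The unimodular substitution `(s, t) = (c x₁ + (nc + 1) x₂, x₁ + n x₂)` then turns
`Tr(a₃ x²) / 2` into `(cr - n)(s² + t²) - 2r st`, and since `2|r| < cr - n` this form takes its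
minimum `cr - n` exactly at `(s, t) = (±1, 0), (0, ±1)`.
-/

def binForm (a b : ℤ) (p : ℤ × ℤ) : ℤ := a * (p.1 ^ 2 + p.2 ^ 2) + b * p.1 * p.2

lemma sq_add_sq_eq_zero_iff {p : ℤ × ℤ} : p.1 ^ 2 + p.2 ^ 2 = 0 ↔ p = 0 := by
  simp [sq, mul_self_add_mul_self_eq_zero, Prod.ext_iff]

lemma sq_add_sq_eq_one_iff {p : ℤ × ℤ} :
    p.1 ^ 2 + p.2 ^ 2 = 1 ↔ p = (1, 0) ∨ p = (-1, 0) ∨ p = (0, 1) ∨ p = (0, -1) := by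
  obtain ⟨s, t⟩ := p
  constructor
  · intro h
    obtain ⟨hs₁, hs₂⟩ := abs_le.mp <| (sq_le_one_iff_abs_le_one s).mp (by nlinarith [sq_nonneg t])
    obtain ⟨ht₁, ht₂⟩ := abs_le.mp <| (sq_le_one_iff_abs_le_one t).mp (by nlinarith [sq_nonneg s])
    interval_cases s <;> interval_cases t <;> simp_all
  · rintro (h | h | h | h) <;> simp_all

section BinForm

variable {a b : ℤ}

lemma lt_binForm (hb : |b| < a) {p : ℤ × ℤ} (hp : 2 ≤ p.1 ^ 2 + p.2 ^ 2) :
    a < binForm a b p := by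
  obtain ⟨s, t⟩ := p
  obtain ⟨hb₁, hb₂⟩ := abs_lt.mp hb
  unfold binForm
  dsimp only at hp ⊢
  rcases le_total 0 (s * t) with hst | hst
  · nlinarith [sq_nonneg (s - t), mul_nonneg (by linarith : (0:ℤ) ≤ a + b) hst]
  · nlinarith [sq_nonneg (s + t), mul_nonneg (by linarith : (0:ℤ) ≤ a - b) (neg_nonneg.mpr hst)]

lemma binForm_eq_iff (hb : |b| < a) {p : ℤ × ℤ} :
    binForm a b p = a ↔ p.1 ^ 2 + p.2 ^ 2 = 1 := by
  refine ⟨fun h => ?_, fun h => ?_⟩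
  · rcases (show p.1 ^ 2 + p.2 ^ 2 = 0 ∨ p.1 ^ 2 + p.2 ^ 2 = 1 ∨ 2 ≤ p.1 ^ 2 + p.2 ^ 2 by
      have := add_nonneg (sq_nonneg p.1) (sq_nonneg p.2); omega) with h0 | h1 | h2
    · rw [sq_add_sq_eq_zero_iff.mp h0] at h
      simp only [binForm, Prod.fst_zero, Prod.snd_zero] at h
      linarith [abs_nonneg b]
    · exact h1
    · exact absurd h (lt_binForm hb h2).ne'
  · rcases sq_add_sq_eq_one_iff.mp h with rfl | rfl | rfl | rfl <;> simp [binForm]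

lemma le_binForm (hb : |b| < a) {p : ℤ × ℤ} (hp : p ≠ 0) : a ≤ binForm a b p := by
  have h0 : p.1 ^ 2 + p.2 ^ 2 ≠ 0 := mt sq_add_sq_eq_zero_iff.mp hp
  rcases (show p.1 ^ 2 + p.2 ^ 2 = 1 ∨ 2 ≤ p.1 ^ 2 + p.2 ^ 2 by
    have := add_nonneg (sq_nonneg p.1) (sq_nonneg p.2); omega) with h1 | h2
  · exact ((binForm_eq_iff hb).mpr h1).ge
  · exact (lt_binForm hb h2).le

end BinForm

def coordChange (n c : ℤ) (x : ℤ × ℤ) : ℤ × ℤ := (c * x.1 + (n * c + 1) * x.2, x.1 + n * x.2)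

lemma coordChange_eq_iff {n c : ℤ} {x p : ℤ × ℤ} :
    coordChange n c x = p ↔ x = ((n * c + 1) * p.2 - n * p.1, p.1 - c * p.2) := by
  constructor
  · rintro rfl
    ext <;> simp only [coordChange] <;> ring
  · rintro rfl
    ext <;> simp only [coordChange] <;> ring

lemma IsMinOf.eq {d : ℤ} {a : QF} {μ ν : ℚ} (hμ : IsMinOf d a μ) (hν : IsMinOf d a ν) :
    μ = ν := by
  obtain ⟨⟨x, hx, rfl⟩, hμ⟩ := hμ
  obtain ⟨⟨y, hy, rfl⟩, hν⟩ := hν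
  exact le_antisymm (hμ y hy) (hν x hx)

section Reduction

variable {d n r c α β : ℤ}

lemma trForm_eq_binForm (hβ : β = c ^ 2 - 1) (hα : α = β * n + c) (hd : d = n ^ 2 + r)
    (hr : β * r = 2 * n * c + 1) (x : ℤ × ℤ) :
    trForm d ((α : ℚ), (β : ℚ)) x = 2 * binForm (c * r - n) (-2 * r) (coordChange n c x) := by
  have key : α * (x.1 ^ 2 + d * x.2 ^ 2) + 2 * d * β * x.1 * x.2 =
      binForm (c * r - n) (-2 * r) (coordChange n c x) := by
    simp only [binForm, coordChange]
    subst hα hd hβ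
    linear_combination (-c * (x.1 + n * x.2) ^ 2 - n * x.2 ^ 2) * hr
  simp only [trForm]
  rw [← key]
  push_cast
  ring

lemma isMinOf_of_reduction (hβ : β = c ^ 2 - 1) (hα : α = β * n + c) (hd : d = n ^ 2 + r)
    (hr : β * r = 2 * n * c + 1) (hb : 2 * |r| < c * r - n) :
    IsMinOf d ((α : ℚ), (β : ℚ)) ((2 * (c * r - n) : ℤ) : ℚ) := by
  have hb' : |-2 * r| < c * r - n := by rwa [abs_mul, abs_neg, abs_two]
  refine ⟨⟨(n, -1), by simp [Prod.ext_iff], ?_⟩, fun x hx => ?_⟩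
  · rw [trForm_eq_binForm hβ hα hd hr, (binForm_eq_iff hb').mpr]
    · push_cast; ring
    · simp only [coordChange]; ring
  · rw [trForm_eq_binForm hβ hα hd hr]
    have hx' : coordChange n c x ≠ 0 := by
      rw [Ne, coordChange_eq_iff]; simpa [← Prod.zero_eq_mk] using hx
    exact_mod_cast mul_le_mul_of_nonneg_left (le_binForm hb' hx') zero_le_two

lemma minVecs_of_reduction (hβ : β = c ^ 2 - 1) (hα : α = β * n + c) (hd : d = n ^ 2 + r)
    (hr : β * r = 2 * n * c + 1) (hb : 2 * |r| < c * r - n) :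
    MinVecs d ((α : ℚ), (β : ℚ)) ((2 * (c * r - n) : ℤ) : ℚ) =
      {(n, -1), (-n, 1), (α * n - β * d, α - β * n), (-(α * n - β * d), -(α - β * n))} := by
  have hb' : |-2 * r| < c * r - n := by rwa [abs_mul, abs_neg, abs_two]
  have h₁ : α * n - β * d = -(n * c + 1) := by subst hα hd; linear_combination -hr
  have h₂ : α - β * n = c := by rw [hα]; ring
  ext x
  simp only [MinVecs, Set.mem_ofPred_eq, trForm_eq_binForm hβ hα hd hr]
  rw [Int.cast_mul, Int.cast_two, mul_right_inj' two_ne_zero, Int.cast_inj, binForm_eq_iff hb',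
    sq_add_sq_eq_one_iff]
  simp only [coordChange_eq_iff, h₁, h₂, Set.mem_insert_iff, Set.mem_singleton_iff, mul_zero,
    mul_one, mul_neg, zero_sub, sub_zero, neg_neg]
  tauto

end Reduction

lemma eq_of_sq_add_eq_sq_add {n N r R : ℤ} (h : n ^ 2 + r = N ^ 2 + R)
    (hr₁ : -n < r) (hr₂ : r ≤ n) (hR₁ : -N < R) (hR₂ : R ≤ N) : n = N := by
  rcases lt_trichotomy n N with hlt | heq | hgt
  · nlinarith
  · exact heq
  · nlinarith

lemma abs_lt_of_mul_eq {c N R : ℤ} (hc : 3 ≤ |c|) (hN : 0 < N)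
    (h : (c ^ 2 - 1) * R = 2 * N * c + 1) : |R| < N := by
  rw [← sq_abs c] at h
  have habs : (|c| ^ 2 - 1) * |R| = |2 * N * c + 1| := by
    rw [← h, abs_mul, abs_of_nonneg (a := |c| ^ 2 - 1) (by nlinarith)]
  have hle : |2 * N * c + 1| ≤ 2 * N * |c| + 1 := by
    calc |2 * N * c + 1| ≤ |2 * N * c| + |1| := abs_add_le _ _
      _ = 2 * N * |c| + 1 := by rw [abs_mul, abs_of_pos (by positivity), abs_one]
  by_contra! hR
  nlinarith [mul_le_mul_of_nonneg_left hR (by nlinarith : (0 : ℤ) ≤ |c| ^ 2 - 1),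
    mul_nonneg hN.le (by nlinarith : (0 : ℤ) ≤ (|c| - 3) * (|c| + 1))]

lemma two_mul_abs_lt {c n r : ℤ} (hc : 4 ≤ |c|) (hn : 0 < n) (hr : r ≠ -1)
    (h : (c ^ 2 - 1) * r = 2 * n * c + 1) : 2 * |r| < c * r - n := by
  rcases le_or_gt 0 c with hc0 | hc0
  · rw [abs_of_nonneg hc0] at hc
    have hr0 : 0 < r := by
      by_contra! hr0
      nlinarith [mul_nonpos_of_nonneg_of_nonpos (by nlinarith : (0 : ℤ) ≤ c ^ 2 - 1) hr0]
    rw [abs_of_pos hr0]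
    by_contra! hlt
    nlinarith [mul_le_mul_of_nonneg_left hlt (by linarith : (0 : ℤ) ≤ 2 * c),
      mul_nonneg (by nlinarith : (0 : ℤ) ≤ c * (c - 4)) hr0.le]
  · rw [abs_of_neg hc0] at hc
    have hr0 : r < 0 := by
      by_contra! hr0
      nlinarith [mul_nonneg (by nlinarith : (0 : ℤ) ≤ c ^ 2 - 1) hr0]
    have hr2 : r ≤ -2 := by omega
    rw [abs_of_neg hr0]
    by_contra! hlt
    nlinarith [mul_le_mul_of_nonneg_left hlt (by linarith : (0 : ℤ) ≤ -2 * c),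
      mul_nonneg (by nlinarith : (0 : ℤ) ≤ c * (c + 4)) (by linarith : (0 : ℤ) ≤ -r - 2)]

section OddShift

variable {m : ℤ}

lemma sq_modEq_one_of_odd (hm : Odd m) :
    ((m - 1) / 2 * (m + 2) ^ 2 + 1) ^ 2 ≡ 1 [ZMOD (m * (m + 2)) ^ 2] := by
  obtain ⟨k, rfl⟩ := hm
  rw [show (2 * k + 1 - 1) / 2 = k by omega]
  exact (Int.modEq_iff_dvd.mpr ⟨k * (k + 2), by ring⟩).symm

lemma modEq_neg_of_odd (hm : Odd m) :
    (m - 1) / 2 * (m + 2) ^ 2 + 1 ≡ -(m + 1) [ZMOD m * (m + 2)] := by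
  obtain ⟨k, rfl⟩ := hm
  rw [show (2 * k + 1 - 1) / 2 = k by omega]
  exact (Int.modEq_iff_dvd.mpr ⟨k + 1, by ring⟩).symm

lemma exists_shift_of_modEq {α β : ℤ} (hm : 3 ≤ m) (hmodd : Odd m) (hβ : β = m * (m + 2))
    (hcong : α ≡ (m - 1) / 2 * (m + 2) ^ 2 + 1 [ZMOD β ^ 2] ∨
      α ≡ -((m - 1) / 2 * (m + 2) ^ 2 + 1) [ZMOD β ^ 2]) :
    ∃ c, 4 ≤ |c| ∧ β = c ^ 2 - 1 ∧ α ≡ c [ZMOD β] ∧ α ^ 2 ≡ 1 [ZMOD β ^ 2] := by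
  subst hβ
  have hdvd : m * (m + 2) ∣ (m * (m + 2)) ^ 2 := Dvd.intro_left _ (sq _).symm
  rcases hcong with h | h
  · refine ⟨-(m + 1), ?_, by ring, (h.of_dvd hdvd).trans (modEq_neg_of_odd hmodd),
      (h.pow 2).trans (sq_modEq_one_of_odd hmodd)⟩
    rw [abs_neg, abs_of_pos (by omega)]
    omega
  · refine ⟨m + 1, ?_, by ring, ?_, ?_⟩
    · rw [abs_of_pos (by omega)]
      omega
    · simpa using (h.of_dvd hdvd).trans (modEq_neg_of_odd hmodd).neg
    · exact (neg_sq ((m - 1) / 2 * (m + 2) ^ 2 + 1) ▸ h.pow 2).trans (sq_modEq_one_of_odd hmodd)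

end OddShift

lemma norm_eq_one_of_sq_modEq {d α β : ℤ} (hu : IsUnitPair d (α, β))
    (hα : α ^ 2 ≡ 1 [ZMOD β ^ 2]) (hβ : 2 ≤ β) : α ^ 2 - d * β ^ 2 = 1 := by
  refine hu.resolve_right fun h => ?_
  have h2 : β ^ 2 ∣ 2 := by
    rw [show (2 : ℤ) = (1 - α ^ 2) + d * β ^ 2 by linarith]
    exact dvd_add (Int.modEq_iff_dvd.mp hα) (dvd_mul_left _ _)
  have := Int.le_of_dvd two_pos h2
  nlinarith

section Pell

variable {d c α β : ℤ}

lemma abs_lt_of_norm_eq_one (hd : 0 < d) (hα : 0 < α) (hnorm : α ^ 2 - d * β ^ 2 = 1)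
    (hβ : β = c ^ 2 - 1) (hc : 2 ≤ |c|) : |c| < α := by
  rw [← sq_abs c] at hβ
  have hβ2 : |c| ^ 2 ≤ β ^ 2 := pow_le_pow_left₀ (abs_nonneg c) (by nlinarith) 2
  have : β ^ 2 ≤ d * β ^ 2 := le_mul_of_one_le_left (sq_nonneg β) hd
  nlinarith

lemma mul_sub_sq_eq_of_norm_eq_one {N : ℤ} (hβ : β = c ^ 2 - 1) (hβ0 : β ≠ 0)
    (hα : α = β * N + c) (hnorm : α ^ 2 - d * β ^ 2 = 1) : β * (d - N ^ 2) = 2 * N * c + 1 :=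
  mul_left_cancel₀ hβ0 <| by linear_combination -hnorm + (α + β * N + c) * hα - hβ

end Pell

theorem statement13_general (d n r : ℤ) (hd : d = n ^ 2 + r) (hdpos : 0 < d)
    (hn : 0 < n) (hr1 : -n < r) (hr2 : r ≤ n)
    (hrnem1 : r ≠ -1)
    (m α β : ℤ) (hm : 3 ≤ m) (hmodd : Odd m) (hβ : β = m * (m + 2))
    (hfund : IsFundUnit d α β)
    (hcong : α ≡ (m - 1) / 2 * (m + 2) ^ 2 + 1 [ZMOD β ^ 2] ∨
      α ≡ -((m - 1) / 2 * (m + 2) ^ 2 + 1) [ZMOD β ^ 2]) :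
    let a₃ : QF := ((α : ℚ), (β : ℚ))
    ∀ μ : ℚ, IsMinOf d a₃ μ →
      MinVecs d a₃ μ =
        ({(n, -1), (-n, 1), (α * n - β * d, α - β * n),
          (-(α * n - β * d), -(α - β * n))} : Set (ℤ × ℤ)) := by
  intro a₃ μ hμ
  obtain ⟨hα0, -, hunit, -⟩ := hfund
  obtain ⟨c, hc, hβc, hαc, hα2⟩ := exists_shift_of_modEq hm hmodd hβ hcong
  have hβ0 : 0 < β := by nlinarith
  have hnorm := norm_eq_one_of_sq_modEq hunit hα2 (by nlinarith)
  obtain ⟨N, hN⟩ := hαc.symm.dvd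
  replace hN : α = β * N + c := by linarith
  have hR := mul_sub_sq_eq_of_norm_eq_one hβc hβ0.ne' hN hnorm
  have hN0 : 0 < N := pos_of_mul_pos_right (a := β) (by
    linarith [le_abs_self c, abs_lt_of_norm_eq_one hdpos hα0 hnorm hβc (by omega)]) hβ0.le
  obtain ⟨hR₁, hR₂⟩ := abs_lt.mp (abs_lt_of_mul_eq (by omega) hN0 (hβc ▸ hR))
  obtain rfl : n = N := eq_of_sq_add_eq_sq_add (by omega) hr1 hr2 hR₁ hR₂.le
  rw [show d - n ^ 2 = r by omega] at hR
  have hb := two_mul_abs_lt hc hn hrnem1 (hβc ▸ hR)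
  rw [hμ.eq (isMinOf_of_reduction hβc hN hd hR hb)]
  exact minVecs_of_reduction hβc hN hd hR hb

/-- under the hypotheses of the main theorem, for `a₃ = α + β√d`
one has `M(a₃) = {±(n − √d), ±(α − β√d)(n + √d)}` exactly.
Here `(α − β√d)(n + √d) = (αn − βd) + (α − βn)√d`. -/
theorem statement13 (d n r : ℤ) (hd : d = n ^ 2 + r) (hdpos : 0 < d) (hsf : Squarefree d)
    (hmod : d % 4 = 2 ∨ d % 4 = 3) (hn : 0 < n) (hr1 : -n < r) (hr2 : r ≤ n)
    (hrne1 : r ≠ 1) (hrnem1 : r ≠ -1)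
    (m α β : ℤ) (hm : 3 ≤ m) (hmodd : Odd m) (hβ : β = m * (m + 2))
    (hfund : IsFundUnit d α β)
    (hcong : α ≡ (m - 1) / 2 * (m + 2) ^ 2 + 1 [ZMOD β ^ 2] ∨
      α ≡ -((m - 1) / 2 * (m + 2) ^ 2 + 1) [ZMOD β ^ 2]) :
    let a₃ : QF := ((α : ℚ), (β : ℚ))
    ∀ μ : ℚ, IsMinOf d a₃ μ →
      MinVecs d a₃ μ =
        ({(n, -1), (-n, 1), (α * n - β * d, α - β * n),
          (-(α * n - β * d), -(α - β * n))} : Set (ℤ × ℤ)) :=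
  statement13_general d n r hd hdpos hn hr1 hr2 hrnem1 m α β hm hmodd hβ hfund hcong
end
end

section
/- Let d be a positive square-free integer with d ≡ 2 or 3 (mod 4), d = n² + r with integers n > 0 and −n < r ≠ ±1 ≤ n, and suppose the fundamental unit of K = ℚ(√d) is α + β√d with β = m(m+2) for some odd integer m ≥ 3 and α ≡ ±((m−1)/2·(m+2)² + 1) (mod β²). Let a₁ = 1/2 + ((2n²+r−1)/(4n(n²+r)))√d, a₂ = 1/2 − ((2n²+r−1)/(4n(n²+r)))√d, a₃ = α + β√d. Then a₁, a₂, a₃ lie in pairwise distinct classes: for no i ≠ j do there exist λ ∈ ℚ with λ > 0 and a unit u ∈ O_K^× such that aᵢ = λ·aⱼ·u². -/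
/-!
We model the real quadratic field `K = ℚ(√d)` concretely: an element
`a.1 + a.2·√d` is represented by its pair of rational coordinates
`a : ℚ × ℚ`, and the ring of integers `O_K = ℤ[√d]` (for `d ≡ 2, 3 mod 4`)
by pairs of integers `x : ℤ × ℤ` representing `x.1 + x.2·√d`.
-/

noncomputable section

/-!
Two invariants of a class separate the three forms. Since units have norm `±1`, the norm
`N(a) = a.1² - d a.2²` only changes by the square of `λ ∈ ℚ`. Now `N(a₃) = ±1`, while
`N(a₁) = N(a₂) = (4n² - (r - 1)²) / (16 n² d)` is positive and, `d` being squarefree, a rational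
square only if `4n² - (r - 1)² = j² d`, which the bounds on `r` rule out. Hence `a₃` is in
neither class. If `a₁ = λ a₂ u²`, the norms force `λ = 1`, so `u²` is the ratio `a₁ / ā₁` of
real embeddings. As `a₁ + ā₁ = 1` and `a₁ ā₁ = N(a₁) ≥ 3 / (16 d)`, this ratio lies strictly
between `1` and `16 d / 3 < β² d < ε²`, where `ε = α + β√d`; but a unit square `> 1` is `≥ ε²`.
-/

def qnorm (d : ℤ) (a : QF) : ℚ := a.1 ^ 2 - d * a.2 ^ 2

section QuadraticField

variable {d α β : ℤ}

lemma qnorm_qmul (a b : QF) : qnorm d (qmul d a b) = qnorm d a * qnorm d b := by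
  simp only [qnorm, qmul]; ring

lemma qnorm_smul (c : ℚ) (a : QF) : qnorm d (c • a) = c ^ 2 * qnorm d a := by
  simp only [qnorm, Prod.smul_fst, Prod.smul_snd, smul_eq_mul]; ring

lemma qnorm_conj (a : QF) : qnorm d (conj a) = qnorm d a := by
  simp [qnorm, conj]

lemma qnorm_ofInt (u : ℤ × ℤ) : qnorm d (ofInt u) = ((u.1 ^ 2 - d * u.2 ^ 2 : ℤ) : ℚ) := by
  simp [qnorm, ofInt]

lemma IsUnitPair.qnorm_eq {u : ℤ × ℤ} (hu : IsUnitPair d u) :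
    qnorm d (ofInt u) = 1 ∨ qnorm d (ofInt u) = -1 := by
  rw [qnorm_ofInt]
  rcases hu with h | h <;> simp [h]

lemma IsUnitPair.qnorm_sq {u : ℤ × ℤ} (hu : IsUnitPair d u) :
    qnorm d (qmul d (ofInt u) (ofInt u)) = 1 := by
  rw [qnorm_qmul]
  rcases hu.qnorm_eq with h | h <;> simp [h]

lemma IsUnitPair.neg {u : ℤ × ℤ} (hu : IsUnitPair d u) : IsUnitPair d (-u) := by
  simpa [IsUnitPair, neg_sq] using hu

lemma IsUnitPair.conj {u : ℤ × ℤ} (hu : IsUnitPair d u) : IsUnitPair d (u.1, -u.2) := by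
  simpa [IsUnitPair, neg_sq] using hu

lemma conj_conj (a : QF) : conj (conj a) = a := by
  simp [conj]

lemma conj_qmul (a b : QF) : conj (qmul d a b) = qmul d (conj a) (conj b) := by
  ext <;> simp only [conj, qmul] <;> ring

lemma conj_smul (c : ℚ) (a : QF) : conj (c • a) = c • conj a := by
  ext <;> simp [conj]

lemma conj_ofInt (u : ℤ × ℤ) : conj (ofInt u) = ofInt (u.1, -u.2) := by
  simp [conj, ofInt]

lemma emb_smul (c : ℚ) (a : QF) : emb d (c • a) = c * emb d a := by
  simp only [emb, Prod.smul_fst, Prod.smul_snd, smul_eq_mul]; push_cast; ring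

lemma emb_ofInt (u : ℤ × ℤ) : emb d (ofInt u) = u.1 + u.2 * √(d : ℝ) := by
  simp [emb, ofInt]

lemma emb_qmul (hd : 0 ≤ d) (a b : QF) : emb d (qmul d a b) = emb d a * emb d b := by
  have h : √(d : ℝ) ^ 2 = d := Real.sq_sqrt (by exact_mod_cast hd)
  simp only [emb, qmul]
  push_cast
  linear_combination (-(a.2 : ℝ) * b.2) * h

lemma emb_mul_emb_conj (hd : 0 ≤ d) (a : QF) : emb d a * emb d (conj a) = qnorm d a := by
  have h : √(d : ℝ) ^ 2 = d := Real.sq_sqrt (by exact_mod_cast hd)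
  simp only [emb, conj, qnorm]
  push_cast
  linear_combination (-(a.2 : ℝ) ^ 2) * h

lemma SameClass.conj {a b : QF} (h : SameClass d a b) : SameClass d (conj a) (conj b) := by
  obtain ⟨c, hc, u, hu, rfl⟩ := h
  exact ⟨c, hc, (u.1, -u.2), hu.conj, by rw [conj_smul, conj_qmul, conj_qmul, conj_ofInt]⟩

lemma SameClass.exists_qnorm_eq {a b : QF} (h : SameClass d a b) :
    ∃ c : ℚ, 0 < c ∧ qnorm d a = c ^ 2 * qnorm d b := by
  obtain ⟨c, hc, u, hu, rfl⟩ := h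
  exact ⟨c, hc, by rw [qnorm_smul, qnorm_qmul, hu.qnorm_sq, mul_one]⟩

lemma not_sameClass_of_not_isSquare_qnorm {a b : QF} (ha : 0 < qnorm d a)
    (ha' : ¬ IsSquare (qnorm d a)) (hb : qnorm d b = 1 ∨ qnorm d b = -1) :
    ¬ SameClass d a b ∧ ¬ SameClass d b a := by
  constructor
  · intro h
    obtain ⟨c, -, hc⟩ := h.exists_qnorm_eq
    rcases hb with hb | hb <;> rw [hb] at hc
    · exact ha' ⟨c, by rw [hc]; ring⟩
    · nlinarith [sq_nonneg c]
  · intro h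
    obtain ⟨c, hc0, hc⟩ := h.exists_qnorm_eq
    rcases hb with hb | hb <;> rw [hb] at hc
    · exact ha' ⟨c⁻¹, by field_simp; linarith⟩
    · nlinarith [sq_nonneg c]

lemma IsFundUnit.sq_le (hfund : IsFundUnit d α β) {u : ℤ × ℤ} (hu : IsUnitPair d u)
    (h1 : 1 < emb d (ofInt u) ^ 2) : ((α : ℝ) + β * √(d : ℝ)) ^ 2 ≤ emb d (ofInt u) ^ 2 := by
  have hpos : (0 : ℝ) ≤ α + β * √(d : ℝ) := by
    have := hfund.1; have := hfund.2.1; positivity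
  rw [one_lt_sq_iff_one_lt_abs, emb_ofInt] at h1
  rw [emb_ofInt]
  refine (pow_le_pow_left₀ hpos ?_ 2).trans_eq (sq_abs _)
  rcases abs_cases ((u.1 : ℝ) + u.2 * √(d : ℝ)) with ⟨habs, -⟩ | ⟨habs, -⟩ <;> rw [habs] at h1 ⊢
  · exact hfund.2.2.2 u hu h1
  · have := hfund.2.2.2 (-u) hu.neg (by push_cast [Prod.fst_neg, Prod.snd_neg]; linarith)
    push_cast [Prod.fst_neg, Prod.snd_neg] at this
    linarith

lemma IsFundUnit.one_le_sq_mul (hd : 0 < d) (hfund : IsFundUnit d α β) (hβ : 3 ≤ β) {q : ℚ}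
    (hq : 3 ≤ 16 * d * q) : 1 ≤ ((α : ℝ) + β * √(d : ℝ)) ^ 2 * q := by
  have hα : (0 : ℝ) ≤ α := by exact_mod_cast hfund.1.le
  have hβ : (3 : ℝ) ≤ β := by exact_mod_cast hβ
  have hq : (3 : ℝ) ≤ 16 * d * q := by exact_mod_cast hq
  have hd : (0 : ℝ) < d := by exact_mod_cast hd
  have hε : 9 * (d : ℝ) ≤ ((α : ℝ) + β * √(d : ℝ)) ^ 2 :=
    calc 9 * (d : ℝ) ≤ (β * √(d : ℝ)) ^ 2 := by
          rw [mul_pow, Real.sq_sqrt hd.le]; gcongr; nlinarith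
      _ ≤ ((α : ℝ) + β * √(d : ℝ)) ^ 2 := by gcongr; linarith
  nlinarith [mul_le_mul_of_nonneg_right hε (by nlinarith : (0 : ℝ) ≤ q)]

lemma not_sameClass_conj (hd : 0 < d) (hfund : IsFundUnit d α β) {a : QF}
    (ha : TotPos d a) (ha₂ : 0 < a.2)
    (hlt : emb d a < ((α : ℝ) + β * √(d : ℝ)) ^ 2 * emb d (conj a)) :
    ¬ SameClass d a (conj a) := by
  rintro ⟨c, hc, u, hu, h⟩
  have hN : (0 : ℚ) < qnorm d a := by
    exact_mod_cast emb_mul_emb_conj hd.le a ▸ mul_pos ha.1 ha.2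
  have hc1 : c = 1 := by
    have hq := congrArg (qnorm d) h
    rw [qnorm_smul, qnorm_qmul, hu.qnorm_sq, qnorm_conj, mul_one] at hq
    have hc2 : c ^ 2 = 1 := mul_right_cancel₀ hN.ne' (by linear_combination -hq)
    exact (pow_eq_one_iff_of_nonneg hc.le two_ne_zero).mp hc2
  have he : emb d a = emb d (conj a) * emb d (ofInt u) ^ 2 := by
    rw [congrArg (emb d) h, emb_smul, emb_qmul hd.le, emb_qmul hd.le, hc1]; push_cast; ring
  have hconj : emb d (conj a) < emb d a := by
    have : (0 : ℝ) < a.2 * √(d : ℝ) := by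
      have : (0 : ℝ) < a.2 := by exact_mod_cast ha₂
      have := Real.sqrt_pos.mpr (show (0 : ℝ) < d by exact_mod_cast hd)
      positivity
    simp only [emb, conj]; push_cast; linarith
  have hu1 : 1 < emb d (ofInt u) ^ 2 := by nlinarith [ha.2]
  nlinarith [hfund.sq_le hu hu1, ha.2]

lemma totPos_of_fst_eq_half (hd : 0 ≤ d) {a : QF} (ha₁ : a.1 = 1 / 2) (hN : 0 < qnorm d a) :
    TotPos d a := by
  have hsum : emb d a + emb d (conj a) = 1 := by
    simp only [emb, conj, ha₁]; push_cast; ring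
  have hprod := emb_mul_emb_conj hd a
  have hN' : (0 : ℝ) < qnorm d a := by exact_mod_cast hN
  constructor <;> nlinarith

lemma emb_lt_mul_emb_conj (hd : 0 ≤ d) {a : QF} (ha₁ : a.1 = 1 / 2) (hN : 0 < qnorm d a)
    {K : ℝ} (hK : 1 ≤ K * qnorm d a) : emb d a < K * emb d (conj a) := by
  have hsum : emb d a + emb d (conj a) = 1 := by
    simp only [emb, conj, ha₁]; push_cast; ring
  have hprod := emb_mul_emb_conj hd a
  have hpos := totPos_of_fst_eq_half hd ha₁ hN
  have hx : emb d a < 1 := by linarith [hpos.2]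
  by_contra! h
  nlinarith [mul_le_mul_of_nonneg_left h hpos.1.le, mul_lt_mul_of_pos_left hx hpos.1]

end QuadraticField

lemma Squarefree.exists_eq_sq_mul_of_isSquare_div {d P c : ℤ} (hsf : Squarefree d) (hc : c ≠ 0)
    (h : IsSquare ((P : ℚ) / (c ^ 2 * d))) : ∃ j : ℤ, P = j ^ 2 * d := by
  obtain ⟨q, hq⟩ := h
  have hd : d ≠ 0 := hsf.ne_zero
  have hPd : IsSquare ((P * d : ℤ) : ℚ) := ⟨c * d * q, by
    field_simp at hq
    push_cast
    linear_combination (d : ℚ) * hq⟩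
  obtain ⟨k, hk⟩ := Rat.isSquare_intCast_iff.mp hPd
  obtain ⟨j, rfl⟩ : d ∣ k := (hsf.dvd_pow_iff_dvd two_ne_zero).mp ⟨P, by rw [sq, ← hk, mul_comm]⟩
  exact ⟨j, mul_right_cancel₀ hd (by linear_combination hk)⟩

section Bounds

variable {n r : ℤ}

lemma three_mul_sq_le (hr₁ : -n < r) (hr₂ : r ≤ n) : 3 * n ^ 2 ≤ 4 * n ^ 2 - (r - 1) ^ 2 := by
  nlinarith [mul_nonneg (by omega : (0 : ℤ) ≤ n - (r - 1)) (by omega : (0 : ℤ) ≤ n + (r - 1))]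

lemma sq_mul_ne_four_mul_sq_sub_sq (hn : 0 < n) (hr₁ : -n < r) (hr₂ : r ≤ n) (hr : r ≠ -1)
    (j : ℤ) : j ^ 2 * (n ^ 2 + r) ≠ 4 * n ^ 2 - (r - 1) ^ 2 := by
  intro h
  have hP := three_mul_sq_le hr₁ hr₂
  rcases le_or_gt |j| 2 with hj | hj
  · have : j ^ 2 = 0 ∨ j ^ 2 = 1 ∨ j ^ 2 = 4 := by
      have := abs_nonneg j
      rw [← sq_abs]; interval_cases |j| <;> simp
    rcases this with h2 | h2 | h2 <;> rw [h2] at h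
    · nlinarith
    · nlinarith
    · have : (r + 1) ^ 2 = 0 := by linear_combination h
      exact hr (by linarith [pow_eq_zero_iff (n := 2) two_ne_zero |>.mp this])
  · have : 9 ≤ j ^ 2 := by nlinarith [sq_abs j, abs_nonneg j]
    nlinarith [mul_le_mul_of_nonneg_right this (by nlinarith : (0 : ℤ) ≤ n ^ 2 + r)]

def aOne (n r : ℤ) : QF :=
  (1 / 2, (2 * (n : ℚ) ^ 2 + (r : ℚ) - 1) / (4 * (n : ℚ) * ((n : ℚ) ^ 2 + (r : ℚ))))

variable {d : ℤ}

lemma qnorm_aOne (hd : d = n ^ 2 + r) (hn : n ≠ 0) (hd₀ : d ≠ 0) :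
    qnorm d (aOne n r) = ((4 * n ^ 2 - (r - 1) ^ 2 : ℤ) : ℚ) / (((4 * n : ℤ) : ℚ) ^ 2 * d) := by
  subst hd
  have hd' : (n : ℚ) ^ 2 + r ≠ 0 := by exact_mod_cast hd₀
  simp only [qnorm, aOne]
  push_cast
  field_simp
  ring

lemma three_le_mul_qnorm_aOne (hd : d = n ^ 2 + r) (hn : 0 < n) (hr₁ : -n < r) (hr₂ : r ≤ n)
    (hd₀ : d ≠ 0) : 3 ≤ 16 * d * qnorm d (aOne n r) := by
  have hP : ((3 * n ^ 2 : ℤ) : ℚ) ≤ ((4 * n ^ 2 - (r - 1) ^ 2 : ℤ) : ℚ) := by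
    exact_mod_cast three_mul_sq_le hr₁ hr₂
  rw [qnorm_aOne hd hn.ne' hd₀]
  push_cast at hP ⊢
  rw [show 16 * (d : ℚ) * ((4 * n ^ 2 - (r - 1) ^ 2) / ((4 * n) ^ 2 * d))
      = (4 * n ^ 2 - (r - 1) ^ 2) / n ^ 2 by field_simp; ring, le_div_iff₀ (by positivity)]
  linarith

lemma not_isSquare_qnorm_aOne (hd : d = n ^ 2 + r) (hsf : Squarefree d) (hn : 0 < n)
    (hr₁ : -n < r) (hr₂ : r ≤ n) (hr : r ≠ -1) : ¬ IsSquare (qnorm d (aOne n r)) := by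
  rw [qnorm_aOne hd hn.ne' hsf.ne_zero]
  intro h
  obtain ⟨j, hj⟩ := hsf.exists_eq_sq_mul_of_isSquare_div (by positivity) h
  exact sq_mul_ne_four_mul_sq_sub_sq hn hr₁ hr₂ hr j (hd ▸ hj.symm)

lemma aOne_snd_pos (hn : 0 < n) (hr₁ : -n < r) : 0 < (aOne n r).2 := by
  have hS : (0 : ℚ) < 2 * n ^ 2 + r - 1 := by
    exact_mod_cast (by nlinarith : (0 : ℤ) < 2 * n ^ 2 + r - 1)
  have hd : (0 : ℚ) < n ^ 2 + r := by exact_mod_cast (by nlinarith : (0 : ℤ) < n ^ 2 + r)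
  have hn' : (0 : ℚ) < n := by exact_mod_cast hn
  simp only [aOne]
  positivity

end Bounds

theorem statement15_general (d n r : ℤ) (hd : d = n ^ 2 + r) (hdpos : 0 < d) (hsf : Squarefree d)
    (hn : 0 < n) (hr1 : -n < r) (hr2 : r ≤ n)
    (hrnem1 : r ≠ -1)
    (m α β : ℤ) (hm : 3 ≤ m) (hβ : β = m * (m + 2))
    (hfund : IsFundUnit d α β) :
    let a₁ : QF := (1 / 2, (2 * (n : ℚ) ^ 2 + (r : ℚ) - 1) / (4 * (n : ℚ) * ((n : ℚ) ^ 2 + (r : ℚ))))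
    let a₂ : QF := (1 / 2, -((2 * (n : ℚ) ^ 2 + (r : ℚ) - 1) / (4 * (n : ℚ) * ((n : ℚ) ^ 2 + (r : ℚ)))))
    let a₃ : QF := ((α : ℚ), (β : ℚ))
    ¬ SameClass d a₁ a₂ ∧ ¬ SameClass d a₂ a₁ ∧
      ¬ SameClass d a₁ a₃ ∧ ¬ SameClass d a₃ a₁ ∧
      ¬ SameClass d a₂ a₃ ∧ ¬ SameClass d a₃ a₂ := by
  intro a₁ a₂ a₃
  have hN₃ : 3 ≤ 16 * d * qnorm d a₁ := three_le_mul_qnorm_aOne hd hn hr1 hr2 hdpos.ne'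
  have hN : 0 < qnorm d a₁ := by
    have : (0 : ℚ) < d := by exact_mod_cast hdpos
    nlinarith
  have hNsq : ¬ IsSquare (qnorm d a₁) := not_isSquare_qnorm_aOne hd hsf hn hr1 hr2 hrnem1
  have h₃ : qnorm d a₃ = 1 ∨ qnorm d a₃ = -1 := hfund.2.2.1.qnorm_eq
  have h₁₃ := not_sameClass_of_not_isSquare_qnorm hN hNsq h₃
  have h₂₃ := not_sameClass_of_not_isSquare_qnorm (a := conj a₁)
    (by rwa [qnorm_conj]) (by rwa [qnorm_conj]) h₃
  have h₁₂ : ¬ SameClass d a₁ a₂ := not_sameClass_conj hdpos hfund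
    (totPos_of_fst_eq_half hdpos.le rfl hN) (aOne_snd_pos hn hr1)
    (emb_lt_mul_emb_conj hdpos.le rfl hN (hfund.one_le_sq_mul hdpos (by nlinarith) hN₃))
  have h₂₁ : ¬ SameClass d a₂ a₁ := fun h ↦ by
    have h' : SameClass d (conj (conj a₁)) (conj a₁) := h.conj
    exact h₁₂ (by rwa [conj_conj] at h')
  exact ⟨h₁₂, h₂₁, h₁₃.1, h₁₃.2, h₂₃.1, h₂₃.2⟩

/-- under the hypotheses of the main theorem, the forms
`a₁ x², a₂ x², a₃ x²` lie in pairwise distinct classes: for no `i ≠ j` is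
`aᵢ = λ · aⱼ · u²` with `λ ∈ ℚ`, `λ > 0` and `u` a unit of `O_K`. -/
theorem statement15 (d n r : ℤ) (hd : d = n ^ 2 + r) (hdpos : 0 < d) (hsf : Squarefree d)
    (hmod : d % 4 = 2 ∨ d % 4 = 3) (hn : 0 < n) (hr1 : -n < r) (hr2 : r ≤ n)
    (hrne1 : r ≠ 1) (hrnem1 : r ≠ -1)
    (m α β : ℤ) (hm : 3 ≤ m) (hmodd : Odd m) (hβ : β = m * (m + 2))
    (hfund : IsFundUnit d α β)
    (hcong : α ≡ (m - 1) / 2 * (m + 2) ^ 2 + 1 [ZMOD β ^ 2] ∨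
      α ≡ -((m - 1) / 2 * (m + 2) ^ 2 + 1) [ZMOD β ^ 2]) :
    let a₁ : QF := (1 / 2, (2 * (n : ℚ) ^ 2 + (r : ℚ) - 1) / (4 * (n : ℚ) * ((n : ℚ) ^ 2 + (r : ℚ))))
    let a₂ : QF := (1 / 2, -((2 * (n : ℚ) ^ 2 + (r : ℚ) - 1) / (4 * (n : ℚ) * ((n : ℚ) ^ 2 + (r : ℚ)))))
    let a₃ : QF := ((α : ℚ), (β : ℚ))
    ¬ SameClass d a₁ a₂ ∧ ¬ SameClass d a₂ a₁ ∧
      ¬ SameClass d a₁ a₃ ∧ ¬ SameClass d a₃ a₁ ∧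
      ¬ SameClass d a₂ a₃ ∧ ¬ SameClass d a₃ a₂ :=
  statement15_general d n r hd hdpos hsf hn hr1 hr2 hrnem1 m α β hm hβ hfund
end
end
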